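/- Let p_i, p_j : [t₀, ∞) → ℝ³ satisfy ṗ_i = R_i v, ṗ_j = R_j v with ‖v‖ = s, where R_i(t), R_j(t) ∈ SO(3) satisfy ‖R_i(t) − R_j(t)‖_F ≤ 2π e^{−k_w (t−t₀)} for constants s, k_w > 0. Then the relative position p_{ij} = p_i − p_j satisfies ‖p_{ij}(t) − p_{ij}(t₀)‖ ≤ 2πs/k_w for all t ≥ t₀. -/

import Mathlib

open Matrix

/-- Membership in SO(3): RᵀR = I and det R = 1. -/
def SO3 (R : Matrix (Fin 3) (Fin 3) ℝ) : Prop :=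
  Rᵀ * R = 1 ∧ R.det = 1

/-- Frobenius norm ‖A‖_F = √(tr(AᵀA)). -/
noncomputable def frobNorm (A : Matrix (Fin 3) (Fin 3) ℝ) : ℝ :=
  Real.sqrt (Aᵀ * A).trace

/-- Action of a matrix on a Euclidean vector. -/
noncomputable def mulE (A : Matrix (Fin 3) (Fin 3) ℝ) (w : EuclideanSpace ℝ (Fin 3)) :
    EuclideanSpace ℝ (Fin 3) :=
  (WithLp.equiv 2 (Fin 3 → ℝ)).symm (A.mulVec ((WithLp.equiv 2 (Fin 3 → ℝ)) w))

lemma mulE_norm_le (A : Matrix (Fin 3) (Fin 3) ℝ) (w : EuclideanSpace ℝ (Fin 3)) :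
    ‖mulE A w‖ ≤ frobNorm A * ‖w‖ := by
  have htr : (Aᵀ * A).trace = ∑ i, ∑ j, (A i j) ^ 2 := by
    rw [Matrix.trace]
    simp only [Matrix.diag, Matrix.mul_apply, Matrix.transpose_apply]
    rw [Finset.sum_comm]
    simp [sq]
  have hW : ‖w‖ = Real.sqrt (∑ j, (w j) ^ 2) := by
    rw [EuclideanSpace.norm_eq]; simp [sq_abs]
  rw [EuclideanSpace.norm_eq, frobNorm, htr, hW, ← Real.sqrt_mul (by positivity)]
  apply Real.sqrt_le_sqrt
  rw [Finset.sum_mul]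
  apply Finset.sum_le_sum
  intro i _
  have he : (mulE A w) i = ∑ j, A i j * w j := by
    rfl
  rw [he, Real.norm_eq_abs, sq_abs]
  exact Finset.sum_mul_sq_le_sq_mul_sq _ _ _

lemma mulE_sub (A B : Matrix (Fin 3) (Fin 3) ℝ) (w : EuclideanSpace ℝ (Fin 3)) :
    mulE (A - B) w = mulE A w - mulE B w := by
  simp only [mulE, Matrix.sub_mulVec]
  rfl

/-- Pairwise displacement bound: if ṗ_i = R_i v, ṗ_j = R_j v with ‖v‖ = s and
‖R_i(t) − R_j(t)‖_F ≤ 2π e^{−k_w(t−t₀)}, then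
‖p_{ij}(t) − p_{ij}(t₀)‖ ≤ 2πs/k_w for all t ≥ t₀. -/
theorem pairwise_displacement_bound
    (pi pj : ℝ → EuclideanSpace ℝ (Fin 3))
    (Ri Rj : ℝ → Matrix (Fin 3) (Fin 3) ℝ)
    (v : EuclideanSpace ℝ (Fin 3)) (s kw t₀ : ℝ)
    (hs : 0 < s) (hkw : 0 < kw) (hv : ‖v‖ = s)
    (hSOi : ∀ t, SO3 (Ri t)) (hSOj : ∀ t, SO3 (Rj t))
    (hpi : ∀ t ≥ t₀, HasDerivAt pi (mulE (Ri t) v) t)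
    (hpj : ∀ t ≥ t₀, HasDerivAt pj (mulE (Rj t) v) t)
    (hRfrob : ∀ t ≥ t₀, frobNorm (Ri t - Rj t) ≤ 2 * Real.pi * Real.exp (-kw * (t - t₀))) :
    ∀ t ≥ t₀, ‖(pi t - pj t) - (pi t₀ - pj t₀)‖ ≤ 2 * Real.pi * s / kw := by
  intro t ht
  set f : ℝ → EuclideanSpace ℝ (Fin 3) := fun x => (pi x - pj x) - (pi t₀ - pj t₀) with hf
  set f' : ℝ → EuclideanSpace ℝ (Fin 3) := fun x => mulE (Ri x - Rj x) v with hf'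
  have hderiv : ∀ x ∈ Set.Icc t₀ t, HasDerivAt f (f' x) x := by
    intro x hx
    have h1 := (hpi x hx.1).sub (hpj x hx.1)
    have h2 : HasDerivAt f (mulE (Ri x) v - mulE (Rj x) v) x := h1.sub_const _
    simpa [hf', mulE_sub] using h2
  set B : ℝ → ℝ := fun x => (2 * Real.pi * s / kw) * (1 - Real.exp (-kw * (x - t₀))) with hB
  set B' : ℝ → ℝ := fun x => 2 * Real.pi * s * Real.exp (-kw * (x - t₀)) with hB'
  have hBderiv : ∀ x, HasDerivAt B (B' x) x := by
    intro x
    have h1 : HasDerivAt (fun x : ℝ => -kw * (x - t₀)) (-kw) x := by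
      simpa using ((hasDerivAt_id x).sub_const t₀).const_mul (-kw)
    have h2 : HasDerivAt (fun x : ℝ => Real.exp (-kw * (x - t₀)))
        (Real.exp (-kw * (x - t₀)) * (-kw)) x := h1.exp
    have h3 : HasDerivAt (fun x : ℝ => 1 - Real.exp (-kw * (x - t₀)))
        (-(Real.exp (-kw * (x - t₀)) * (-kw))) x := h2.const_sub 1
    have h4 := h3.const_mul (2 * Real.pi * s / kw)
    convert h4 using 1
    show 2 * Real.pi * s * Real.exp (-kw * (x - t₀)) = (2 * Real.pi * s / kw) * -(Real.exp (-kw * (x - t₀)) * (-kw))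
    field_simp [hB', hkw.ne']
    all_goals rfl
  have hbound : ∀ x ∈ Set.Ico t₀ t, ‖f' x‖ ≤ B' x := by
    intro x hx
    calc ‖f' x‖ ≤ frobNorm (Ri x - Rj x) * ‖v‖ := mulE_norm_le _ _
      _ ≤ (2 * Real.pi * Real.exp (-kw * (x - t₀))) * s := by
          rw [hv]; exact mul_le_mul_of_nonneg_right (hRfrob x hx.1) hs.le
      _ = B' x := by ring
  have hmain : ‖f t‖ ≤ B t := by
    refine image_norm_le_of_norm_deriv_right_le_deriv_boundary
      (fun x hx => (hderiv x hx).continuousAt.continuousWithinAt)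
      (fun x hx => (hderiv x (Set.mem_Icc_of_Ico hx)).hasDerivWithinAt)
      ?_ hBderiv hbound (Set.right_mem_Icc.mpr ht)
    simp [hf, hB]
  have hBle : B t ≤ 2 * Real.pi * s / kw := by
    have h1 : 1 - Real.exp (-kw * (t - t₀)) ≤ 1 := by
      have := Real.exp_pos (-kw * (t - t₀)); linarith
    have h2 : 0 ≤ 2 * Real.pi * s / kw := by positivity
    calc B t ≤ (2 * Real.pi * s / kw) * 1 := mul_le_mul_of_nonneg_left h1 h2
      _ = _ := mul_one _
  simpa [hf] using hmain.trans hBle
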